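/- The number of permutations π ∈ Sₙ with pexc(π) = k and π(1) ≠ 1 equals Σ over i with max(n−k−2,0) ≤ i ≤ ⌊(2n−k−2)/2⌋ of C(n−1, i)·d(n−i, k−n+i+2), where d(m, r) is the number of derangements of m elements with r cycles. -/

import Mathlib

open Equiv Finset Filter
open scoped Classical

noncomputable section

/-- Number of fixed points of a permutation. -/
def c1 {n : ℕ} (π : Equiv.Perm (Fin n)) : ℕ :=
  (Finset.univ.filter fun i => π i = i).card

/-- Number of cycles of length at least 2 of a permutation. -/
def c2 {n : ℕ} (π : Equiv.Perm (Fin n)) : ℕ := π.cycleType.card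

/-- The prefix exchange distance, given by the Akers–Krishnamurthy formula. -/
def pexc {n : ℕ} (π : Equiv.Perm (Fin n)) : ℕ :=
  n + c2 π - c1 π - (if ∀ i : Fin n, (i : ℕ) = 0 → π i = i then 0 else 2)

/-- Whitney numbers of the second kind for the star poset. -/
def W (n k : ℕ) : ℕ :=
  (Finset.univ.filter fun π : Equiv.Perm (Fin n) => pexc π = k).card

/-- Total number of cycles of a permutation (fixed points count as 1-cycles). -/
def numCycles {n : ℕ} (π : Equiv.Perm (Fin n)) : ℕ := c2 π + c1 π

/-- Number of derangements of `m` elements with `r` cycles. -/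
def dnum (m r : ℕ) : ℕ :=
  (Finset.univ.filter fun π : Equiv.Perm (Fin m) =>
    (∀ i, π i ≠ i) ∧ numCycles π = r).card

/-!
When `π 0 ≠ 0` the formula reads `pexc π = n + c₂ − c₁ − 2`, so `pexc π = k` fixes
`c₂ = k + c₁ + 2 − n`, and `1 ≤ c₂`, `2 c₂ ≤ n − c₁` confine `i = c₁` to the summation range.
A permutation whose fixed-point set is a given `i`-subset `s` of `{1, …, n−1}` is the same as a
derangement of the complement of `s`, with the same nontrivial cycles; there are `C(n−1, i)`
choices of `s`.
-/

namespace Equiv.Perm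

variable {α β : Type*} [Fintype α] [DecidableEq α] [Fintype β] [DecidableEq β]

theorem card_filter_moved_iff_cycleType (p : α → Prop) [DecidablePred p] (e : β ≃ Subtype p)
    (P : Multiset ℕ → Prop) [DecidablePred P] :
    #{g : Perm α | (∀ a, g a ≠ a ↔ p a) ∧ P g.cycleType} =
      #{σ : Perm β | (∀ b, σ b ≠ b) ∧ P σ.cycleType} := by
  refine (card_bij (fun σ _ => σ.extendDomain e) ?_ ?_ ?_).symm
  · intro σ hσ
    simp only [mem_filter, mem_univ, true_and, cycleType_extendDomain] at hσ ⊢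
    refine ⟨fun a => ?_, hσ.2⟩
    by_cases ha : p a
    · simp only [extendDomain_apply_subtype _ _ ha, ha, iff_true]
      exact fun h => hσ.1 _ (e.eq_symm_apply.mpr (Subtype.ext h))
    · simp [extendDomain_apply_not_subtype _ _ ha, ha]
  · exact fun σ _ τ _ h => extendDomainHom_injective e h
  · intro g hg
    simp only [mem_filter, mem_univ, true_and] at hg
    obtain ⟨hmoved, hP⟩ := hg
    have hp : ∀ a, p (g a) ↔ p a := fun a => by
      rw [← hmoved, ← hmoved, ne_eq, ne_eq, g.injective.eq_iff]
    set σ : Perm β := e.symm.permCongr (g.subtypePerm hp)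
    have hext : σ.extendDomain e = g := by
      ext a
      by_cases ha : p a
      · simp [σ, extendDomain_apply_subtype _ _ ha]
      · simpa [extendDomain_apply_not_subtype _ _ ha, eq_comm] using (hmoved a).not.mpr ha
    refine ⟨σ, ?_, hext⟩
    simp only [mem_filter, mem_univ, true_and]
    refine ⟨fun b hb => (hmoved (e b)).mpr (e b).2 ?_, by rwa [← cycleType_extendDomain e, hext]⟩
    rw [← hext, extendDomain_apply_image, hb]

end Equiv.Perm

section

variable {n : ℕ}

lemma c1_eq_card_compl_support (π : Perm (Fin n)) : c1 π = #π.supportᶜ := by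
  rw [c1, Perm.support, compl_filter]
  simp only [not_not]

lemma c1_add_card_support (π : Perm (Fin n)) : c1 π + #π.support = n := by
  rw [c1_eq_card_compl_support, card_compl_add_card, Fintype.card_fin]

lemma two_mul_c2_le_card_support (π : Perm (Fin n)) : 2 * c2 π ≤ #π.support := by
  rw [c2, ← Perm.sum_cycleType, mul_comm, ← smul_eq_mul]
  exact Multiset.card_nsmul_le_sum fun _ => Perm.two_le_of_mem_cycleType

lemma c2_pos_of_apply_ne {π : Perm (Fin n)} {a : Fin n} (h : π a ≠ a) : 0 < c2 π :=
  Perm.card_cycleType_pos.mpr fun h1 => h (by simp [h1])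

lemma pexc_of_apply_ne (hn : 0 < n) {π : Perm (Fin n)} (h : π ⟨0, hn⟩ ≠ ⟨0, hn⟩) :
    pexc π = n + c2 π - c1 π - 2 := by
  rw [pexc, if_neg fun h0 => h (h0 _ rfl)]

lemma pexc_eq_iff (hn : 0 < n) {π : Perm (Fin n)} (h : π ⟨0, hn⟩ ≠ ⟨0, hn⟩) (k : ℕ) :
    pexc π = k ↔ c1 π ∈ Icc (n - k - 2) ((2 * n - k - 2) / 2) ∧ c2 π = k + c1 π + 2 - n := by
  have := c1_add_card_support π
  have := two_mul_c2_le_card_support π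
  have := c2_pos_of_apply_ne h
  rw [pexc_of_apply_ne hn h, mem_Icc]
  omega

lemma dnum_eq_card_filter_cycleType (m r : ℕ) :
    dnum m r = #{σ : Perm (Fin m) | (∀ i, σ i ≠ i) ∧ σ.cycleType.card = r} := by
  refine congrArg card (filter_congr fun σ _ => and_congr_right fun hσ => ?_)
  rw [numCycles, c2, c1, filter_false_of_mem fun i _ => hσ i, card_empty, add_zero]

lemma card_filter_compl_support_eq_c2_eq (s : Finset (Fin n)) (r : ℕ) :
    #{π : Perm (Fin n) | π.supportᶜ = s ∧ c2 π = r} = dnum (n - #s) r := by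
  have hcard : Fintype.card {a // a ∉ s} = n - #s := by
    rw [Fintype.card_subtype_compl, Fintype.card_coe, Fintype.card_fin]
  have hfixed (π : Perm (Fin n)) : π.supportᶜ = s ↔ ∀ a, π a ≠ a ↔ a ∉ s := by
    rw [← compl_inj_iff, compl_compl, Finset.ext_iff]
    simp only [Perm.mem_support, mem_compl]
  rw [dnum_eq_card_filter_cycleType]
  convert Perm.card_filter_moved_iff_cycleType (· ∉ s) (Fintype.equivFinOfCardEq hcard).symm
    (fun μ => μ.card = r) using 3 with π
  exact and_congr_left fun _ => hfixed π

lemma card_filter_apply_ne_c1_c2 (a : Fin n) (i r : ℕ) :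
    #{π : Perm (Fin n) | π a ≠ a ∧ c1 π = i ∧ c2 π = r} = (n - 1).choose i * dnum (n - i) r := by
  rw [card_eq_sum_card_fiberwise (f := fun π => π.supportᶜ) (t := powersetCard i (univ.erase a))]
  · have hfibre : ∀ s ∈ powersetCard i (univ.erase a),
        #{π ∈ {π : Perm (Fin n) | π a ≠ a ∧ c1 π = i ∧ c2 π = r} | π.supportᶜ = s} =
          dnum (n - i) r := by
      intro s hs
      obtain ⟨hsub, rfl⟩ := mem_powersetCard.mp hs
      rw [filter_filter, ← card_filter_compl_support_eq_c2_eq]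
      refine congrArg card (filter_congr fun π _ => ?_)
      constructor
      · rintro ⟨⟨-, -, hc2⟩, hs⟩
        exact ⟨hs, hc2⟩
      · rintro ⟨rfl, hc2⟩
        refine ⟨⟨fun h => ?_, c1_eq_card_compl_support π, hc2⟩, rfl⟩
        simpa [h] using hsub (mem_compl.mpr (Perm.notMem_support.mpr h))
    rw [sum_congr rfl hfibre, sum_const, card_powersetCard, card_erase_of_mem (mem_univ a),
      card_univ, Fintype.card_fin, smul_eq_mul]
  · intro π hπ
    simp only [mem_coe, mem_filter, mem_univ, true_and] at hπ
    refine mem_powersetCard.mpr ⟨fun b hb => mem_erase.mpr ⟨?_, mem_univ b⟩, ?_⟩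
    · rintro rfl
      exact hπ.1 (Perm.notMem_support.mp (mem_compl.mp hb))
    · rw [← c1_eq_card_compl_support, hπ.2.1]

end

theorem stmt14 (n k : ℕ) (hn : 0 < n) :
    (Finset.univ.filter fun π : Equiv.Perm (Fin n) =>
        pexc π = k ∧ π ⟨0, hn⟩ ≠ ⟨0, hn⟩).card =
      ∑ i ∈ Finset.Icc (n - k - 2) ((2 * n - k - 2) / 2),
        (n - 1).choose i * dnum (n - i) (k + i + 2 - n) := by
  set z : Fin n := ⟨0, hn⟩
  set I := Icc (n - k - 2) ((2 * n - k - 2) / 2)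
  have hpexc (π : Perm (Fin n)) :
      pexc π = k ∧ π z ≠ z ↔ π z ≠ z ∧ c1 π ∈ I ∧ c2 π = k + c1 π + 2 - n := by
    rw [and_comm]
    exact and_congr_right (pexc_eq_iff hn · k)
  rw [filter_congr fun π _ => hpexc π,
    card_eq_sum_card_fiberwise (f := c1) (t := I) fun π hπ => (mem_filter.mp hπ).2.2.1]
  refine sum_congr rfl fun i hi => ?_
  rw [filter_filter, ← card_filter_apply_ne_c1_c2 z]
  refine congrArg card (filter_congr fun π _ => ⟨?_, ?_⟩)
  · rintro ⟨⟨h, -, hc2⟩, rfl⟩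
    exact ⟨h, rfl, hc2⟩
  · rintro ⟨h, rfl, hc2⟩
    exact ⟨⟨h, hi, hc2⟩, rfl⟩
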